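/- arXiv:2208.10436 — 4 statements merged into one kernel-verified Lean document; each statement's English description precedes it below -/
import Mathlib

section
/- Let V be a finite set with n = |V| ≥ 1 and let < be a linear order on V; write [i] for the set of the first i elements and pa(i) ⊆ [i−1] for each i. Define u = δ_V − δ_∅ − ∑_{i ∈ V} (δ_{{i} ∪ pa(i)} − δ_{pa(i)}). Then u = ∑_{i ∈ V} u_{⟨{i}, [i−1] ∖ pa(i) | pa(i)⟩}, where u_{⟨A,B|C⟩} = δ_{A∪B∪C} − δ_{A∪C} − δ_{B∪C} + δ_C and terms with B = ∅ are interpreted as the zero imset. -/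
open Finset

/-- Identifier imset: `deltaI A B = 1` if `B = A`, else `0`. -/
def deltaI {V : Type*} [DecidableEq V] (A B : Finset V) : ℤ :=
  if B = A then 1 else 0

/-- Semi-elementary imset `u_{⟨A,B|C⟩}` (zero when `B = ∅`). -/
def semiImset {V : Type*} [DecidableEq V] (A B C S : Finset V) : ℤ :=
  deltaI (A ∪ B ∪ C) S - deltaI (A ∪ C) S - deltaI (B ∪ C) S + deltaI C S

/-- The set of strict predecessors of `i` (that is, `[i-1]`). -/
def below {V : Type*} [Fintype V] [LinearOrder V] (i : V) : Finset V :=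
  Finset.univ.filter (fun j => j < i)

lemma telescope {V : Type*} [LinearOrder V] (F : Finset V → ℤ) (s : Finset V) :
    ∑ i ∈ s, (F (insert i (s.filter (· < i))) - F (s.filter (· < i))) = F s - F ∅ := by
  induction s using Finset.induction_on_max with
  | empty => simp
  | insert a s ha ih =>
    have hna : a ∉ s := fun h => lt_irrefl a (ha a h)
    rw [Finset.sum_insert hna]
    have h1 : (insert a s).filter (· < a) = s := by
      ext x
      simp only [Finset.mem_filter, Finset.mem_insert]
      constructor
      · rintro ⟨h | h, hlt⟩
        · exact absurd hlt (by simp [h])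
        · exact h
      · exact fun h => ⟨Or.inr h, ha x h⟩
    have h2 : ∀ i ∈ s, (insert a s).filter (· < i) = s.filter (· < i) := by
      intro i hi
      ext x
      simp only [Finset.mem_filter, Finset.mem_insert]
      constructor
      · rintro ⟨h | h, hlt⟩
        · exact absurd (h ▸ hlt) (not_lt.2 (ha i hi).le)
        · exact ⟨h, hlt⟩
      · exact fun ⟨h, hlt⟩ => ⟨Or.inr h, hlt⟩
    rw [h1, Finset.sum_congr rfl (fun i hi => by rw [h2 i hi]), ih]
    ring

theorem stmt3 {V : Type*} [Fintype V] [LinearOrder V] [Nonempty V]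
    (pa : V → Finset V) (hpa : ∀ i, pa i ⊆ below i) :
    ∀ S : Finset V,
      deltaI Finset.univ S - deltaI ∅ S
          - ∑ i : V, (deltaI (insert i (pa i)) S - deltaI (pa i) S)
        = ∑ i : V, semiImset {i} (below i \ pa i) (pa i) S := by
  intro S
  have key : ∀ i : V, semiImset {i} (below i \ pa i) (pa i) S
      = (deltaI (insert i (below i)) S - deltaI (below i) S)
        - (deltaI (insert i (pa i)) S - deltaI (pa i) S) := by
    intro i
    have hb : (below i \ pa i) ∪ pa i = below i :=
      Finset.sdiff_union_of_subset (hpa i)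
    have h1 : {i} ∪ (below i \ pa i) ∪ pa i = insert i (below i) := by
      rw [Finset.union_assoc, hb, ← Finset.insert_eq]
    have h2 : ({i} : Finset V) ∪ pa i = insert i (pa i) := (Finset.insert_eq _ _).symm
    rw [semiImset, h1, h2, hb]
    ring
  rw [Finset.sum_congr rfl (fun i _ => key i)]
  have hsplit : ∑ i : V, ((deltaI (insert i (below i)) S - deltaI (below i) S)
      - (deltaI (insert i (pa i)) S - deltaI (pa i) S))
    = (∑ i : V, (deltaI (insert i (below i)) S - deltaI (below i) S))
      - ∑ i : V, (deltaI (insert i (pa i)) S - deltaI (pa i) S) := Finset.sum_sub_distrib _ _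
  have ht : ∑ i : V, (deltaI (insert i (below i)) S - deltaI (below i) S)
      = deltaI Finset.univ S - deltaI ∅ S := by
    have := telescope (fun A => deltaI A S) Finset.univ
    simpa [below, Finset.filter_univ_mem] using this
  rw [hsplit, ht]
end

section
/- Let u be a structural imset over a finite set V, i.e. k·u = ∑_{j} u_{⟨a_j, b_j | C_j⟩} for some positive integer k and a finite list of elementary imsets (with a_j, b_j distinct elements and C_j ⊆ V ∖ {a_j, b_j}). Define c(S) = 1 − ∑_{T : S ⊆ T ⊆ V} u(T). Then for every S ⊆ V: if no j satisfies {a_j, b_j} ⊆ S ⊆ {a_j, b_j} ∪ C_j then c(S) = 1; otherwise c(S) ≤ 0. -/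
open Finset

/-- Elementary imset `u_{⟨a,b|C⟩}`. -/
def elemImset {V : Type*} [DecidableEq V] (a b : V) (C S : Finset V) : ℤ :=
  deltaI ({a, b} ∪ C) S - deltaI (insert a C) S - deltaI (insert b C) S + deltaI C S

lemma sum_deltaI {V : Type*} [Fintype V] [DecidableEq V] (A S : Finset V) :
    (∑ T : Finset V, if S ⊆ T then deltaI A T else 0) = if S ⊆ A then 1 else 0 := by
  have h : ∀ T : Finset V, (if S ⊆ T then deltaI A T else 0)
      = if T = A then (if S ⊆ T then (1:ℤ) else 0) else 0 := by
    intro T; unfold deltaI; split_ifs <;> simp_all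
  rw [Finset.sum_congr rfl fun T _ => h T, Finset.sum_ite_eq' Finset.univ A]
  simp

lemma sum_elem {V : Type*} [Fintype V] [DecidableEq V] (a b : V) (C S : Finset V)
    (hab : a ≠ b) (haC : a ∉ C) (hbC : b ∉ C) :
    (∑ T : Finset V, if S ⊆ T then elemImset a b C T else 0)
      = if ({a, b} ⊆ S ∧ S ⊆ {a, b} ∪ C) then 1 else 0 := by
  have h : ∀ T : Finset V, (if S ⊆ T then elemImset a b C T else 0)
      = (if S ⊆ T then deltaI ({a, b} ∪ C) T else 0)
        - (if S ⊆ T then deltaI (insert a C) T else 0)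
        - (if S ⊆ T then deltaI (insert b C) T else 0)
        + (if S ⊆ T then deltaI C T else 0) := by
    intro T; unfold elemImset; split_ifs <;> ring
  rw [Finset.sum_congr rfl fun T _ => h T]
  rw [Finset.sum_add_distrib, Finset.sum_sub_distrib, Finset.sum_sub_distrib,
    sum_deltaI, sum_deltaI, sum_deltaI, sum_deltaI]
  have hunion : ({a, b} : Finset V) ∪ C = insert a (insert b C) := by
    ext x; simp [Finset.mem_insert, Finset.mem_union, or_assoc]
  by_cases ha : a ∈ S <;> by_cases hb : b ∈ S
  · -- a,b ∈ S
    have h1 : ¬ S ⊆ insert a C := fun hs => by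
      rcases Finset.mem_insert.mp (hs hb) with h | h
      · exact hab h.symm
      · exact hbC h
    have h2 : ¬ S ⊆ insert b C := fun hs => by
      rcases Finset.mem_insert.mp (hs ha) with h | h
      · exact hab h
      · exact haC h
    have h3 : ¬ S ⊆ C := fun hs => haC (hs ha)
    have h4 : ({a, b} : Finset V) ⊆ S := by
      intro x hx; rcases Finset.mem_insert.mp hx with h | h
      · exact h ▸ ha
      · exact (Finset.mem_singleton.mp h) ▸ hb
    simp [h1, h2, h3, h4]
  · have h4 : ¬ (({a, b} : Finset V) ⊆ S) := fun hs =>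
      hb (hs (by simp))
    have h2 : ¬ S ⊆ insert b C := fun hs => by
      rcases Finset.mem_insert.mp (hs ha) with h | h
      · exact hab h
      · exact haC h
    have h3 : ¬ S ⊆ C := fun hs => haC (hs ha)
    have heq : (S ⊆ {a, b} ∪ C) ↔ (S ⊆ insert a C) := by
      rw [hunion, Finset.insert_comm, Finset.subset_insert_iff_of_notMem hb]
    by_cases h5 : S ⊆ insert a C
    · rw [if_pos (heq.mpr h5), if_pos h5, if_neg h2, if_neg h3, if_neg (by simp [h4])]; ring
    · rw [if_neg (fun hs => h5 (heq.mp hs)), if_neg h5, if_neg h2, if_neg h3,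
        if_neg (by simp [h4])]; ring
  · have h4 : ¬ (({a, b} : Finset V) ⊆ S) := fun hs =>
      ha (hs (by simp))
    have h1 : ¬ S ⊆ insert a C := fun hs => by
      rcases Finset.mem_insert.mp (hs hb) with h | h
      · exact hab h.symm
      · exact hbC h
    have h3 : ¬ S ⊆ C := fun hs => hbC (hs hb)
    have heq : (S ⊆ {a, b} ∪ C) ↔ (S ⊆ insert b C) := by
      rw [hunion, Finset.subset_insert_iff_of_notMem ha]
    by_cases h5 : S ⊆ insert b C
    · rw [if_pos (heq.mpr h5), if_pos h5, if_neg h1, if_neg h3, if_neg (by simp [h4])]; ring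
    · rw [if_neg (fun hs => h5 (heq.mp hs)), if_neg h5, if_neg h1, if_neg h3,
        if_neg (by simp [h4])]; ring
  · have h4 : ¬ (({a, b} : Finset V) ⊆ S) := fun hs =>
      ha (hs (by simp))
    have heq1 : (S ⊆ {a, b} ∪ C) ↔ (S ⊆ C) := by
      rw [hunion, Finset.subset_insert_iff_of_notMem ha,
        Finset.subset_insert_iff_of_notMem hb]
    have heq2 : (S ⊆ insert a C) ↔ (S ⊆ C) :=
      Finset.subset_insert_iff_of_notMem ha
    have heq3 : (S ⊆ insert b C) ↔ (S ⊆ C) :=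
      Finset.subset_insert_iff_of_notMem hb
    by_cases h5 : S ⊆ C
    · rw [if_pos (heq1.mpr h5), if_pos (heq2.mpr h5), if_pos (heq3.mpr h5), if_pos h5,
        if_neg (by simp [h4])]; ring
    · rw [if_neg (fun h => h5 (heq1.mp h)), if_neg (fun h => h5 (heq2.mp h)),
        if_neg (fun h => h5 (heq3.mp h)), if_neg h5, if_neg (by simp [h4])]; ring

theorem stmt4 {V : Type*} [Fintype V] [DecidableEq V]
    (u c : Finset V → ℤ) (k m : ℕ) (hk : 0 < k)
    (a b : Fin m → V) (C : Fin m → Finset V)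
    (hab : ∀ j, a j ≠ b j) (haC : ∀ j, a j ∉ C j) (hbC : ∀ j, b j ∉ C j)
    (hstruct : ∀ S : Finset V, (k : ℤ) * u S = ∑ j, elemImset (a j) (b j) (C j) S)
    (hc : ∀ S : Finset V, c S = 1 - ∑ T : Finset V, if S ⊆ T then u T else 0) :
    ∀ S : Finset V,
      ((∀ j, ¬ ({a j, b j} ⊆ S ∧ S ⊆ {a j, b j} ∪ C j)) → c S = 1) ∧
      ((∃ j, {a j, b j} ⊆ S ∧ S ⊆ {a j, b j} ∪ C j) → c S ≤ 0) := by
  intro S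
  set N : ℤ := ∑ T : Finset V, if S ⊆ T then u T else 0 with hN
  have key : (k : ℤ) * N
      = ∑ j, (if ({a j, b j} ⊆ S ∧ S ⊆ {a j, b j} ∪ C j) then (1:ℤ) else 0) := by
    calc (k : ℤ) * N = ∑ T : Finset V, if S ⊆ T then (k : ℤ) * u T else 0 := by
          rw [hN, Finset.mul_sum]
          exact Finset.sum_congr rfl fun T _ => by split_ifs <;> simp
      _ = ∑ T : Finset V, ∑ j, (if S ⊆ T then elemImset (a j) (b j) (C j) T else 0) := by
          refine Finset.sum_congr rfl fun T _ => ?_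
          by_cases h : S ⊆ T
          · simp only [if_pos h]; exact hstruct T
          · simp only [if_neg h]
            exact (Finset.sum_eq_zero fun j _ => rfl).symm
      _ = ∑ j, ∑ T : Finset V, (if S ⊆ T then elemImset (a j) (b j) (C j) T else 0) :=
          Finset.sum_comm
      _ = _ := Finset.sum_congr rfl fun j _ =>
          sum_elem (a j) (b j) (C j) S (hab j) (haC j) (hbC j)
  constructor
  · intro hnone
    have : (k : ℤ) * N = 0 := by
      rw [key]; exact Finset.sum_eq_zero fun j _ => if_neg (hnone j)
    have hN0 : N = 0 := by
      rcases mul_eq_zero.mp this with h | h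
      · exact absurd h (by exact_mod_cast hk.ne')
      · exact h
    rw [hc S, ← hN, hN0]; ring
  · rintro ⟨j, hj⟩
    have hge : (1 : ℤ) ≤ (k : ℤ) * N := by
      rw [key]
      have h := Finset.single_le_sum
        (f := fun i => if ({a i, b i} ⊆ S ∧ S ⊆ {a i, b i} ∪ C i) then (1:ℤ) else 0)
        (fun i _ => by split_ifs <;> norm_num) (Finset.mem_univ j)
      rw [if_pos hj] at h
      exact h
    have hNpos : 0 < N := by
      by_contra h
      push_neg at h
      have : (k : ℤ) * N ≤ 0 := mul_nonpos_of_nonneg_of_nonpos (by exact_mod_cast k.zero_le) h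
      omega
    rw [hc S, ← hN]
    omega
end

section
/- Let P and Q be probability distributions on a finite product space over variables indexed by V, and let A, B, C ⊆ V be pairwise disjoint with A, B nonempty. Suppose Q satisfies the conditional independence X_A ⫫ X_B | X_C. Then the inner product ⟨u_{⟨A,B|C⟩}, KL(P‖Q)⟩ := KL(P_{ABC}‖Q_{ABC}) − KL(P_{AC}‖Q_{AC}) − KL(P_{BC}‖Q_{BC}) + KL(P_C‖Q_C) equals the expected conditional mutual information E_{P_C}[I_P(A;B|C)], and hence is nonnegative; it is zero iff P also satisfies X_A ⫫ X_B | X_C. -/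
open Finset

variable {V : Type*} [Fintype V] [DecidableEq V]

/-- Marginal of `p` on coordinates `S`, evaluated at (the `S`-coordinates of) `ω`. -/
noncomputable def marg {X : V → Type*} [∀ i, Fintype (X i)] [∀ i, DecidableEq (X i)]
    (p : (∀ i, X i) → ℝ) (S : Finset V) (ω : ∀ i, X i) : ℝ :=
  ∑ τ : ∀ i, X i, if ∀ i ∈ S, τ i = ω i then p τ else 0

/-- Kullback–Leibler divergence between the `S`-marginals of `p` and `q`. -/
noncomputable def klMarg {X : V → Type*} [∀ i, Fintype (X i)] [∀ i, DecidableEq (X i)]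
    (p q : (∀ i, X i) → ℝ) (S : Finset V) : ℝ :=
  ∑ ω : ∀ i, X i, p ω * Real.log (marg p S ω / marg q S ω)

/-- `p` satisfies the conditional independence `X_A ⫫ X_B | X_C`. -/
def CondIndep {X : V → Type*} [∀ i, Fintype (X i)] [∀ i, DecidableEq (X i)]
    (p : (∀ i, X i) → ℝ) (A B C : Finset V) : Prop :=
  ∀ ω : ∀ i, X i, 0 < marg p C ω →
    marg p (A ∪ B ∪ C) ω * marg p C ω = marg p (A ∪ C) ω * marg p (B ∪ C) ω

/-- Expected conditional mutual information `E_{P_C}[I_P(A;B|C)]`. -/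
noncomputable def cmi {X : V → Type*} [∀ i, Fintype (X i)] [∀ i, DecidableEq (X i)]
    (p : (∀ i, X i) → ℝ) (A B C : Finset V) : ℝ :=
  ∑ ω : ∀ i, X i, p ω *
    Real.log ((marg p (A ∪ B ∪ C) ω * marg p C ω) / (marg p (A ∪ C) ω * marg p (B ∪ C) ω))

/-!
Marginals are encoded as functions on the whole product space that are constant on the
cylinders `cylinder S ω`; summing such a function over the space counts each of its values
`#(cylinder S ω)` times, a factor independent of `ω`.

Where `P > 0`, conditional independence of `Q` makes the four `Q`-terms of the alternating sum
of log-ratios cancel, which leaves the integrand of `cmi P A B C`. That integrand depends only on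
`x_{A ∪ B ∪ C}`, so up to the positive factor `#(cylinder (A ∪ B ∪ C) ω)` the quantity
`cmi P A B C` is `∑ a log (a / b)` for `a = P_{ABC}` and `b = P_{AC} P_{BC} / P_C`. Gluing the
`A ∪ C`- and `B ∪ C`-coordinates (consistent on `C` since `A ∩ B = ∅`) shows that `a` and `b`
have the same total mass, so Gibbs' inequality gives `cmi ≥ 0`, with equality iff `a = b`,
which is conditional independence of `P`.
-/

section Cylinder

variable {X : V → Type*} [∀ i, Fintype (X i)] [∀ i, DecidableEq (X i)]

def cylinder (S : Finset V) (ω : ∀ i, X i) : Finset (∀ i, X i) :=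
  univ.filter fun τ => ∀ i ∈ S, τ i = ω i

variable {S T : Finset V} {τ σ ω : ∀ i, X i}

lemma mem_cylinder : τ ∈ cylinder S ω ↔ ∀ i ∈ S, τ i = ω i := by
  simp [cylinder]

lemma mem_cylinder_comm : τ ∈ cylinder S ω ↔ ω ∈ cylinder S τ := by
  simp only [mem_cylinder]
  exact forall₂_congr fun _ _ => eq_comm

lemma mem_cylinder_self : ω ∈ cylinder S ω := mem_cylinder.2 fun _ _ => rfl

lemma cylinder_eq_of_mem (h : τ ∈ cylinder S ω) : cylinder S τ = cylinder S ω := by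
  ext ρ
  simp only [mem_cylinder] at *
  exact ⟨fun h' i hi => (h' i hi).trans (h i hi), fun h' i hi => (h' i hi).trans (h i hi).symm⟩

lemma cylinder_anti (hST : S ⊆ T) : cylinder T ω ⊆ cylinder S ω :=
  fun _ hτ => mem_cylinder.2 fun i hi => mem_cylinder.1 hτ i (hST hi)

lemma card_cylinder (S : Finset V) (τ ω : ∀ i, X i) : #(cylinder S τ) = #(cylinder S ω) := by
  refine card_nbij' (fun ρ => S.piecewise ω ρ) (fun ρ => S.piecewise τ ρ) ?_ ?_ ?_ ?_ <;>
    intro ρ hρ <;> simp only [mem_coe, mem_cylinder] at hρ ⊢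
  · exact fun i hi => piecewise_eq_of_mem _ _ _ hi
  · exact fun i hi => piecewise_eq_of_mem _ _ _ hi
  · ext i
    by_cases hi : i ∈ S <;> simp [hi, hρ i]
  · ext i
    by_cases hi : i ∈ S <;> simp [hi, hρ i]

lemma cylinder_inter_cylinder (h : σ ∈ cylinder (S ∩ T) τ) :
    cylinder S τ ∩ cylinder T σ = cylinder (S ∪ T) (S.piecewise τ σ) := by
  ext ρ
  simp only [mem_inter, mem_cylinder, mem_union] at h ⊢
  constructor
  · rintro ⟨hS, hT⟩ i (hi | hi)
    · rw [piecewise_eq_of_mem _ _ _ hi, hS i hi]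
    · by_cases hiS : i ∈ S
      · rw [piecewise_eq_of_mem _ _ _ hiS, hS i hiS]
      · rw [piecewise_eq_of_notMem _ _ _ hiS, hT i hi]
  · intro hρ
    refine ⟨fun i hi => by simpa [hi] using hρ i (Or.inl hi), fun i hi => ?_⟩
    by_cases hiS : i ∈ S
    · simpa [hiS, h i ⟨hiS, hi⟩] using hρ i (Or.inl hiS)
    · simpa [hiS] using hρ i (Or.inr hi)

end Cylinder

section Marginal

variable {X : V → Type*} [∀ i, Fintype (X i)] [∀ i, DecidableEq (X i)]
  {p : (∀ i, X i) → ℝ} {S T : Finset V} {τ ω : ∀ i, X i}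

lemma marg_eq_sum_cylinder (p : (∀ i, X i) → ℝ) (S : Finset V) (ω : ∀ i, X i) :
    marg p S ω = ∑ τ ∈ cylinder S ω, p τ :=
  (sum_filter _ _).symm

lemma marg_congr (h : τ ∈ cylinder S ω) : marg p S τ = marg p S ω := by
  rw [marg_eq_sum_cylinder, marg_eq_sum_cylinder, cylinder_eq_of_mem h]

lemma marg_nonneg (hp : ∀ ω, 0 ≤ p ω) (S : Finset V) (ω : ∀ i, X i) : 0 ≤ marg p S ω := by
  rw [marg_eq_sum_cylinder]
  exact sum_nonneg fun τ _ => hp τ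

lemma le_marg (hp : ∀ ω, 0 ≤ p ω) (S : Finset V) (ω : ∀ i, X i) : p ω ≤ marg p S ω := by
  rw [marg_eq_sum_cylinder]
  exact single_le_sum (fun τ _ => hp τ) mem_cylinder_self

lemma marg_anti (hp : ∀ ω, 0 ≤ p ω) (hST : S ⊆ T) (ω : ∀ i, X i) :
    marg p T ω ≤ marg p S ω := by
  rw [marg_eq_sum_cylinder, marg_eq_sum_cylinder]
  exact sum_le_sum_of_subset_of_nonneg (cylinder_anti hST) fun τ _ _ => hp τ

lemma sum_marg_mul (p f : (∀ i, X i) → ℝ) (S : Finset V) :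
    ∑ ω, marg p S ω * f ω = ∑ τ, p τ * ∑ ω ∈ cylinder S τ, f ω := by
  simp only [marg_eq_sum_cylinder, sum_mul, mul_sum]
  exact sum_comm' fun ω τ => by simp only [mem_univ, and_true, true_and, mem_cylinder_comm]

lemma sum_marg_mul_of_congr (p f : (∀ i, X i) → ℝ) (S : Finset V)
    (hf : ∀ τ ω, τ ∈ cylinder S ω → f τ = f ω) (ω₀ : ∀ i, X i) :
    ∑ ω, marg p S ω * f ω = #(cylinder S ω₀) * ∑ τ, p τ * f τ := by
  rw [sum_marg_mul, mul_sum]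
  refine sum_congr rfl fun τ _ => ?_
  rw [sum_congr rfl fun ω hω => hf ω τ hω, sum_const, nsmul_eq_mul, card_cylinder S τ ω₀]
  ring

lemma sum_cylinder_marg (p : (∀ i, X i) → ℝ) (S T : Finset V) (τ : ∀ i, X i) :
    ∑ ω ∈ cylinder S τ, marg p T ω = #(cylinder (S ∪ T) τ) * marg p (S ∩ T) τ := by
  have hcomm : ∀ ω σ, ω ∈ cylinder S τ ∧ σ ∈ cylinder T ω ↔
      ω ∈ cylinder S τ ∩ cylinder T σ ∧ σ ∈ cylinder (S ∩ T) τ := by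
    intro ω σ
    simp only [mem_inter, mem_cylinder]
    constructor
    · rintro ⟨hS, hT⟩
      exact ⟨⟨hS, fun i hi => (hT i hi).symm⟩, fun i hi =>
        (hT i hi.2).trans (hS i hi.1)⟩
    · rintro ⟨⟨hS, hT⟩, -⟩
      exact ⟨hS, fun i hi => (hT i hi).symm⟩
  simp only [marg_eq_sum_cylinder p T]
  rw [sum_comm' hcomm, marg_eq_sum_cylinder, mul_sum]
  refine sum_congr rfl fun σ hσ => ?_
  rw [sum_const, nsmul_eq_mul, cylinder_inter_cylinder hσ, card_cylinder _ _ τ, mul_comm]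

end Marginal

section Gibbs

open InformationTheory Real

variable {ι : Type*} [Fintype ι] {a b : ι → ℝ}

lemma sum_mul_log_div_eq_sum_mul_klFun (hab : ∀ i, b i = 0 → a i = 0)
    (hsum : ∑ i, a i = ∑ i, b i) :
    ∑ i, a i * log (a i / b i) = ∑ i, b i * klFun (a i / b i) := by
  have hterm : ∀ i, b i * klFun (a i / b i) = a i * log (a i / b i) + (b i - a i) := by
    intro i
    rcases eq_or_ne (b i) 0 with hb | hb
    · simp [hb, hab i hb]
    · rw [klFun_apply]
      field_simp
      ring
  rw [sum_congr rfl fun i _ => hterm i, sum_add_distrib, sum_sub_distrib, hsum, sub_self,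
    add_zero]

lemma sum_mul_log_div_nonneg (ha : ∀ i, 0 ≤ a i) (hb : ∀ i, 0 ≤ b i)
    (hab : ∀ i, b i = 0 → a i = 0) (hsum : ∑ i, a i = ∑ i, b i) :
    0 ≤ ∑ i, a i * log (a i / b i) := by
  rw [sum_mul_log_div_eq_sum_mul_klFun hab hsum]
  exact sum_nonneg fun i _ => mul_nonneg (hb i) (klFun_nonneg (div_nonneg (ha i) (hb i)))

lemma sum_mul_log_div_eq_zero_iff (ha : ∀ i, 0 ≤ a i) (hb : ∀ i, 0 ≤ b i)
    (hab : ∀ i, b i = 0 → a i = 0) (hsum : ∑ i, a i = ∑ i, b i) :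
    ∑ i, a i * log (a i / b i) = 0 ↔ a = b := by
  have hterm : ∀ i, b i * klFun (a i / b i) = 0 ↔ a i = b i := by
    intro i
    rcases eq_or_ne (b i) 0 with hb0 | hb0
    · simp [hb0, hab i hb0]
    · rw [mul_eq_zero, or_iff_right hb0, klFun_eq_zero_iff (div_nonneg (ha i) (hb i)),
        div_eq_one_iff_eq hb0]
  rw [sum_mul_log_div_eq_sum_mul_klFun hab hsum, funext_iff,
    sum_eq_zero_iff_of_nonneg fun i _ =>
      mul_nonneg (hb i) (klFun_nonneg (div_nonneg (ha i) (hb i)))]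
  simp only [mem_univ, true_implies, hterm]

end Gibbs

section CondMutualInfo

variable {X : V → Type*} [∀ i, Fintype (X i)] [∀ i, DecidableEq (X i)]
  {p : (∀ i, X i) → ℝ} {A B C : Finset V}

noncomputable def condIndepMarg (p : (∀ i, X i) → ℝ) (A B C : Finset V) (ω : ∀ i, X i) : ℝ :=
  marg p (A ∪ C) ω * marg p (B ∪ C) ω / marg p C ω

lemma condIndepMarg_nonneg (hp : ∀ ω, 0 ≤ p ω) (ω : ∀ i, X i) : 0 ≤ condIndepMarg p A B C ω :=
  div_nonneg (mul_nonneg (marg_nonneg hp _ _) (marg_nonneg hp _ _)) (marg_nonneg hp _ _)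

lemma marg_eq_zero_of_condIndepMarg_eq_zero (hp : ∀ ω, 0 ≤ p ω) {ω : ∀ i, X i}
    (h : condIndepMarg p A B C ω = 0) : marg p (A ∪ B ∪ C) ω = 0 := by
  have hle : ∀ S ⊆ A ∪ B ∪ C, marg p S ω = 0 → marg p (A ∪ B ∪ C) ω = 0 := fun S hS hS0 =>
    le_antisymm (hS0 ▸ marg_anti hp hS ω) (marg_nonneg hp _ ω)
  rcases div_eq_zero_iff.1 h with h | h
  · rcases mul_eq_zero.1 h with h | h
    · exact hle _ (union_subset_union_left subset_union_left) h
    · exact hle _ (union_subset_union_left subset_union_right) h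
  · exact hle _ subset_union_right h

lemma condIndep_iff_marg_eq_condIndepMarg (hp : ∀ ω, 0 ≤ p ω) :
    CondIndep p A B C ↔ marg p (A ∪ B ∪ C) = condIndepMarg p A B C := by
  refine ⟨fun h => funext fun ω => ?_, fun h ω hC => ?_⟩
  · rcases (marg_nonneg hp C ω).eq_or_lt with hC | hC
    · rw [condIndepMarg, ← hC, div_zero]
      exact le_antisymm (hC ▸ marg_anti hp subset_union_right ω) (marg_nonneg hp _ ω)
    · rw [condIndepMarg, eq_div_iff hC.ne']
      exact h ω hC
  · rw [congrFun h ω, condIndepMarg, div_mul_cancel₀ _ hC.ne']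

lemma sum_condIndepMarg (hp : ∀ ω, 0 ≤ p ω) (hAB : Disjoint A B) :
    ∑ ω, condIndepMarg p A B C ω = ∑ ω, marg p (A ∪ B ∪ C) ω := by
  have hunion : (A ∪ C) ∪ (B ∪ C) = A ∪ B ∪ C := by
    ext i
    simp only [mem_union]
    tauto
  have hinter : (A ∪ C) ∩ (B ∪ C) = C := by
    ext i
    have : i ∈ A → i ∉ B := fun h => disjoint_left.1 hAB h
    simp only [mem_inter, mem_union]
    tauto
  have hfiber : ∀ τ, ∑ ω ∈ cylinder (A ∪ C) τ, marg p (B ∪ C) ω / marg p C ω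
      = #(cylinder (A ∪ B ∪ C) τ) * marg p C τ / marg p C τ := by
    intro τ
    have h := sum_cylinder_marg p (A ∪ C) (B ∪ C) τ
    rw [hunion, hinter] at h
    rw [← h, sum_div]
    exact sum_congr rfl fun ω hω => by rw [marg_congr (cylinder_anti subset_union_right hω)]
  calc ∑ ω, condIndepMarg p A B C ω
      = ∑ τ, p τ * (#(cylinder (A ∪ B ∪ C) τ) * marg p C τ / marg p C τ) := by
        simp only [condIndepMarg, mul_div_assoc, sum_marg_mul, hfiber]
    _ = ∑ τ, p τ * #(cylinder (A ∪ B ∪ C) τ) := by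
        refine sum_congr rfl fun τ _ => ?_
        rcases (hp τ).eq_or_lt with h0 | hpos
        · rw [← h0, zero_mul, zero_mul]
        · rw [mul_div_cancel_right₀ _ (hpos.trans_le (le_marg hp C τ)).ne']
    _ = ∑ ω, marg p (A ∪ B ∪ C) ω := by
        simpa only [mul_one, sum_const, nsmul_eq_mul, one_mul]
          using (sum_marg_mul p (fun _ => 1) (A ∪ B ∪ C)).symm

lemma sum_marg_mul_log_div_condIndepMarg (ω₀ : ∀ i, X i) :
    ∑ ω, marg p (A ∪ B ∪ C) ω * Real.log (marg p (A ∪ B ∪ C) ω / condIndepMarg p A B C ω)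
      = #(cylinder (A ∪ B ∪ C) ω₀) * cmi p A B C := by
  simp only [condIndepMarg, div_div_eq_mul_div]
  refine sum_marg_mul_of_congr p _ _ (fun τ ω h => ?_) ω₀
  rw [marg_congr h, marg_congr (cylinder_anti subset_union_right h),
    marg_congr (cylinder_anti (union_subset_union_left subset_union_left) h),
    marg_congr (cylinder_anti (union_subset_union_left subset_union_right) h)]

end CondMutualInfo

open Real in
lemma log_div_sub_log_div_sub_log_div_add_log_div {p₁ p₂ p₃ p₄ q₁ q₂ q₃ q₄ : ℝ}
    (hp₁ : p₁ ≠ 0) (hp₂ : p₂ ≠ 0) (hp₃ : p₃ ≠ 0) (hp₄ : p₄ ≠ 0)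
    (hq₁ : q₁ ≠ 0) (hq₂ : q₂ ≠ 0) (hq₃ : q₃ ≠ 0) (hq₄ : q₄ ≠ 0) (hq : q₁ * q₄ = q₂ * q₃) :
    log (p₁ / q₁) - log (p₂ / q₂) - log (p₃ / q₃) + log (p₄ / q₄)
      = log (p₁ * p₄ / (p₂ * p₃)) := by
  have hlogq : log q₁ + log q₄ = log q₂ + log q₃ := by
    rw [← log_mul hq₁ hq₄, ← log_mul hq₂ hq₃, hq]
  rw [log_div hp₁ hq₁, log_div hp₂ hq₂, log_div hp₃ hq₃, log_div hp₄ hq₄,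
    log_div (mul_ne_zero hp₁ hp₄) (mul_ne_zero hp₂ hp₃), log_mul hp₁ hp₄, log_mul hp₂ hp₃]
  linarith

lemma klMarg_sub_sub_add_eq_cmi {X : V → Type*} [∀ i, Fintype (X i)] [∀ i, DecidableEq (X i)]
    {P Q : (∀ i, X i) → ℝ} (hP0 : ∀ ω, 0 ≤ P ω) (hQ0 : ∀ ω, 0 ≤ Q ω)
    (habs : ∀ ω, 0 < P ω → 0 < Q ω) {A B C : Finset V} (hQCI : CondIndep Q A B C) :
    klMarg P Q (A ∪ B ∪ C) - klMarg P Q (A ∪ C) - klMarg P Q (B ∪ C) + klMarg P Q C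
      = cmi P A B C := by
  simp only [klMarg, cmi, ← sum_sub_distrib, ← sum_add_distrib, ← mul_sub, ← mul_add]
  refine sum_congr rfl fun ω _ => ?_
  rcases (hP0 ω).eq_or_lt with h0 | hpos
  · rw [← h0, zero_mul, zero_mul]
  have hP : ∀ S, marg P S ω ≠ 0 := fun S => (hpos.trans_le (le_marg hP0 S ω)).ne'
  have hQ : ∀ S, 0 < marg Q S ω := fun S => (habs ω hpos).trans_le (le_marg hQ0 S ω)
  rw [log_div_sub_log_div_sub_log_div_add_log_div (hP _) (hP _) (hP _) (hP _) (hQ _).ne'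
    (hQ _).ne' (hQ _).ne' (hQ _).ne' (hQCI ω (hQ C))]

theorem stmt8_general {X : V → Type*} [∀ i, Fintype (X i)] [∀ i, DecidableEq (X i)]
    (P Q : (∀ i, X i) → ℝ)
    (hP0 : ∀ ω, 0 ≤ P ω) (hP1 : ∑ ω : ∀ i, X i, P ω = 1)
    (hQ0 : ∀ ω, 0 ≤ Q ω)
    (habs : ∀ ω, 0 < P ω → 0 < Q ω)
    (A B C : Finset V)
    (hAB : Disjoint A B)
    (hQCI : CondIndep Q A B C) :
    klMarg P Q (A ∪ B ∪ C) - klMarg P Q (A ∪ C) - klMarg P Q (B ∪ C) + klMarg P Q C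
        = cmi P A B C ∧
      0 ≤ cmi P A B C ∧
      (cmi P A B C = 0 ↔ CondIndep P A B C) := by
  obtain ⟨ω₀⟩ : Nonempty (∀ i, X i) := by
    by_contra h
    simp [not_nonempty_iff.1 h] at hP1
  have hN : (0 : ℝ) < #(cylinder (A ∪ B ∪ C) ω₀) := by
    exact_mod_cast card_pos.2 ⟨ω₀, mem_cylinder_self⟩
  have hcmi := sum_marg_mul_log_div_condIndepMarg (p := P) (A := A) (B := B) (C := C) ω₀
  have ha : ∀ ω, 0 ≤ marg P (A ∪ B ∪ C) ω := marg_nonneg hP0 _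
  have hb : ∀ ω, 0 ≤ condIndepMarg P A B C ω := condIndepMarg_nonneg hP0
  have hab : ∀ ω, condIndepMarg P A B C ω = 0 → marg P (A ∪ B ∪ C) ω = 0 :=
    fun _ => marg_eq_zero_of_condIndepMarg_eq_zero hP0
  have hsum := (sum_condIndepMarg (C := C) hP0 hAB).symm
  refine ⟨klMarg_sub_sub_add_eq_cmi hP0 hQ0 habs hQCI, ?_, ?_⟩
  · have := sum_mul_log_div_nonneg ha hb hab hsum
    rw [hcmi] at this
    exact nonneg_of_mul_nonneg_right this hN
  · rw [condIndep_iff_marg_eq_condIndepMarg hP0, ← sum_mul_log_div_eq_zero_iff ha hb hab hsum,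
      hcmi, mul_eq_zero, or_iff_right hN.ne']

theorem stmt8 {X : V → Type*} [∀ i, Fintype (X i)] [∀ i, DecidableEq (X i)]
    (P Q : (∀ i, X i) → ℝ)
    (hP0 : ∀ ω, 0 ≤ P ω) (hP1 : ∑ ω : ∀ i, X i, P ω = 1)
    (hQ0 : ∀ ω, 0 ≤ Q ω) (hQ1 : ∑ ω : ∀ i, X i, Q ω = 1)
    (habs : ∀ ω, 0 < P ω → 0 < Q ω)
    (A B C : Finset V) (hA : A.Nonempty) (hB : B.Nonempty)
    (hAB : Disjoint A B) (hAC : Disjoint A C) (hBC : Disjoint B C)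
    (hQCI : CondIndep Q A B C) :
    klMarg P Q (A ∪ B ∪ C) - klMarg P Q (A ∪ C) - klMarg P Q (B ∪ C) + klMarg P Q C
        = cmi P A B C ∧
      0 ≤ cmi P A B C ∧
      (cmi P A B C = 0 ↔ CondIndep P A B C) :=
  stmt8_general P Q hP0 hP1 hQ0 habs A B C hAB hQCI
end

section
/- For a structural imset u over V defined as k·u = ∑_j u_{⟨a_j, b_j | C_j⟩} (k a positive integer, finite list of elementary imsets), and its characteristic imset c(S) = 1 − ∑_{T ⊇ S} u(T): c(S) = 1 − k^{−1}·|{ j : {a_j, b_j} ⊆ S ⊆ {a_j, b_j} ∪ C_j }| as rational numbers. In particular, if k = 1 and the constrained-set families {S : {a_j,b_j} ⊆ S ⊆ {a_j,b_j}∪C_j} are pairwise disjoint over j, then c takes values in {0,1}. -/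
open Finset

/-!
Summing `u_{⟨a,b|C⟩}` over the supersets of `S` turns each of its four identifier imsets
`δ_A` into the indicator of `S ⊆ A`. Inside `D = {a, b} ∪ C`, being contained in `{a} ∪ C`,
`{b} ∪ C` or `C` means avoiding `b`, `a` or both, so inclusion–exclusion leaves exactly the
indicator of `{a, b} ⊆ S ⊆ D`. By linearity, `k · ∑_{T ⊇ S} u(T)` counts the triples for which
`S` is a constrained set, which gives `c(S)`; disjointness of the constrained families makes that
count at most one.
-/

lemma subset_iff_subset_insert_and_notMem {V : Type*} [DecidableEq V] {S X : Finset V} {b : V}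
    (hbX : b ∉ X) : S ⊆ X ↔ S ⊆ insert b X ∧ b ∉ S := by
  refine ⟨fun h => ⟨h.trans (subset_insert b X), fun hb => hbX (h hb)⟩, ?_⟩
  rintro ⟨h, hbS⟩ x hx
  exact (mem_insert.1 (h hx)).resolve_left (by rintro rfl; exact hbS hx)

section

variable {V : Type*} [Fintype V] [DecidableEq V]

def superSum (u : Finset V → ℤ) (S : Finset V) : ℤ :=
  ∑ T : Finset V, if S ⊆ T then u T else 0

lemma superSum_add (f g : Finset V → ℤ) (S : Finset V) :
    superSum (fun T => f T + g T) S = superSum f S + superSum g S := by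
  simp only [superSum, ← sum_filter, sum_add_distrib]

lemma superSum_sub (f g : Finset V → ℤ) (S : Finset V) :
    superSum (fun T => f T - g T) S = superSum f S - superSum g S := by
  simp only [superSum, ← sum_filter, sum_sub_distrib]

lemma superSum_const_mul (k : ℤ) (u : Finset V → ℤ) (S : Finset V) :
    superSum (fun T => k * u T) S = k * superSum u S := by
  simp only [superSum, mul_sum, mul_ite, mul_zero]

lemma superSum_sum {ι : Type*} (s : Finset ι) (f : ι → Finset V → ℤ) (S : Finset V) :
    superSum (fun T => ∑ j ∈ s, f j T) S = ∑ j ∈ s, superSum (f j) S := by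
  simp only [superSum, ← sum_filter]
  exact sum_comm

lemma superSum_deltaI (A S : Finset V) :
    superSum (deltaI A) S = if S ⊆ A then 1 else 0 := by
  simp [superSum, deltaI, ← sum_filter]

lemma superSum_elemImset {a b : V} {C : Finset V}
    (hab : a ≠ b) (haC : a ∉ C) (hbC : b ∉ C) (S : Finset V) :
    superSum (elemImset a b C) S = if {a, b} ⊆ S ∧ S ⊆ {a, b} ∪ C then 1 else 0 := by
  have hD : ({a, b} : Finset V) ∪ C = insert a (insert b C) := by
    simp only [insert_union, singleton_union]
  have ha : S ⊆ insert a C ↔ S ⊆ insert a (insert b C) ∧ b ∉ S := by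
    rw [subset_iff_subset_insert_and_notMem (b := b) (by simp [hab.symm, hbC]), insert_comm]
  have hb : S ⊆ insert b C ↔ S ⊆ insert a (insert b C) ∧ a ∉ S :=
    subset_iff_subset_insert_and_notMem (by simp [hab, haC])
  have hC : S ⊆ C ↔ S ⊆ insert a (insert b C) ∧ a ∉ S ∧ b ∉ S := by
    rw [subset_iff_subset_insert_and_notMem hbC, hb, and_assoc]
  show superSum (fun T => elemImset a b C T) S = _
  simp only [elemImset, superSum_add, superSum_sub, superSum_deltaI, hD, ha, hb, hC,
    insert_subset_iff, singleton_subset_iff]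
  by_cases hS : S ⊆ insert a (insert b C) <;> by_cases haS : a ∈ S <;> by_cases hbS : b ∈ S <;>
    simp [hS, haS, hbS]

lemma mul_superSum_eq_card {ι : Type*} [Fintype ι]
    {u : Finset V → ℤ} {k : ℤ} {a b : ι → V} {C : ι → Finset V}
    (hab : ∀ j, a j ≠ b j) (haC : ∀ j, a j ∉ C j) (hbC : ∀ j, b j ∉ C j)
    (hstruct : ∀ S, k * u S = ∑ j, elemImset (a j) (b j) (C j) S) (S : Finset V) :
    k * superSum u S = #{j | {a j, b j} ⊆ S ∧ S ⊆ {a j, b j} ∪ C j} := by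
  rw [← superSum_const_mul, funext hstruct, superSum_sum]
  simp only [superSum_elemImset (hab _) (haC _) (hbC _), sum_boole]

end

theorem stmt11 {V : Type*} [Fintype V] [DecidableEq V]
    (u c : Finset V → ℤ) (k m : ℕ) (hk : 0 < k)
    (a b : Fin m → V) (C : Fin m → Finset V)
    (hab : ∀ j, a j ≠ b j) (haC : ∀ j, a j ∉ C j) (hbC : ∀ j, b j ∉ C j)
    (hstruct : ∀ S : Finset V, (k : ℤ) * u S = ∑ j, elemImset (a j) (b j) (C j) S)
    (hc : ∀ S : Finset V, c S = 1 - ∑ T : Finset V, if S ⊆ T then u T else 0) :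
    (∀ S : Finset V,
        (c S : ℚ)
          = 1 - ((Finset.univ.filter
              (fun j : Fin m => {a j, b j} ⊆ S ∧ S ⊆ {a j, b j} ∪ C j)).card : ℚ) / k) ∧
      (k = 1 →
        (∀ j j' : Fin m, j ≠ j' → ∀ S : Finset V,
          ¬ (({a j, b j} ⊆ S ∧ S ⊆ {a j, b j} ∪ C j) ∧
             ({a j', b j'} ⊆ S ∧ S ⊆ {a j', b j'} ∪ C j'))) →
        ∀ S : Finset V, c S = 0 ∨ c S = 1) := by
  have hcount (S : Finset V) :
      (k : ℤ) * (1 - c S) = #{j | {a j, b j} ⊆ S ∧ S ⊆ {a j, b j} ∪ C j} := by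
    rw [hc S, sub_sub_cancel]
    exact mul_superSum_eq_card hab haC hbC hstruct S
  refine ⟨fun S => ?_, fun hk1 hdisj S => ?_⟩
  · have hkQ : (k : ℚ) ≠ 0 := by positivity
    rw [eq_sub_iff_add_eq, ← eq_sub_iff_add_eq', div_eq_iff hkQ, mul_comm]
    exact_mod_cast (hcount S).symm
  · have hle : #{j | {a j, b j} ⊆ S ∧ S ⊆ {a j, b j} ∪ C j} ≤ 1 :=
      card_le_one.2 fun j hj j' hj' => by_contra fun hne =>
        hdisj j j' hne S ⟨(mem_filter.1 hj).2, (mem_filter.1 hj').2⟩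
    have hcS := hcount S
    rw [hk1, Nat.cast_one, one_mul] at hcS
    omega
end
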